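/- In the graph M: every vertex has degree 3, M is connected, M is bipartite (admits a proper 2-colouring, given by the parity of the canonical representative), and the girth of M equals 6. (These are the properties of the Möbius–Kantor graph verified for this model.) -/

import Mathlib

/-- The Möbius–Kantor graph, realized as the graph on `ZMod 16` in which
distinct `x, y` are adjacent iff there are `a ∈ {0, 1, 3}` and `v : ZMod 16`
with `v.val` even such that `{x, y} = {v, v + (2a - 1)}`. -/
def MKGraph : SimpleGraph (ZMod 16) where
  Adj x y := x ≠ y ∧ ∃ a ∈ ({0, 1, 3} : Set ℕ), ∃ v : ZMod 16, Even v.val ∧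
    s(x, y) = s(v, v + (2 * (a : ZMod 16) - 1))
  symm := by
    constructor
    rintro x y ⟨hxy, a, ha, v, hv, h⟩
    exact ⟨hxy.symm, a, ha, v, hv, Sym2.eq_swap.trans h⟩
  loopless := by
    constructor
    rintro x ⟨hxx, -⟩
    exact hxx rfl


/-! The degree, connectivity and parity claims are finite checks once adjacency is put in the
decidable form `mkGraph_adj_iff`. For the girth: the parity colouring makes every cycle even, two
distinct vertices have at most one common neighbour, which rules out 4-cycles, and the hexagon
0-1-2-7-6-5 gives the upper bound. -/

theorem mkGraph_adj_iff {x y : ZMod 16} :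
    MKGraph.Adj x y ↔ (Even x.val ∧ (y = x + 1 ∨ y = x - 1 ∨ y = x + 5)) ∨
      (Even y.val ∧ (x = y + 1 ∨ x = y - 1 ∨ x = y + 5)) := by
  constructor
  · rintro ⟨-, a, ha, v, hv, hs⟩
    rw [Sym2.eq_iff] at hs
    rcases ha with rfl | rfl | rfl <;>
    · norm_num at hs
      rcases hs with ⟨rfl, rfl⟩ | ⟨rfl, rfl⟩ <;>
        [left; right] <;> refine ⟨hv, by ring_nf; tauto⟩
  · intro h
    refine ⟨?_, ?_⟩
    · rcases h with ⟨-, rfl | rfl | rfl⟩ | ⟨-, rfl | rfl | rfl⟩ <;>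
        simp [eq_sub_iff_add_eq] <;> decide
    rcases h with ⟨hv, rfl | rfl | rfl⟩ | ⟨hv, rfl | rfl | rfl⟩
    · exact ⟨1, by simp, x, hv, by norm_num⟩
    · exact ⟨0, by simp, x, hv, by norm_num; left; ring⟩
    · exact ⟨3, by simp, x, hv, by norm_num⟩
    · exact ⟨1, by simp, y, hv, by norm_num⟩
    · exact ⟨0, by simp, y, hv, by norm_num; right; ring⟩
    · exact ⟨3, by simp, y, hv, by norm_num⟩

instance : DecidableRel MKGraph.Adj := fun _ _ => decidable_of_iff' _ mkGraph_adj_iff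

namespace SimpleGraph

theorem connected_of_forall_adj_add_one {n : ℕ} [NeZero n] {G : SimpleGraph (ZMod n)}
    (h : ∀ x, G.Adj x (x + 1)) : G.Connected := by
  have reach : ∀ k : ℕ, G.Reachable 0 k := by
    intro k
    induction k with
    | zero => simp
    | succ k ih => exact ih.trans (by simpa using (h k).reachable)
  refine (connected_iff_exists_forall_reachable G).2 ⟨0, fun x => ?_⟩
  simpa using reach x.val

variable {V : Type*} {G : SimpleGraph V}

theorem Walk.IsCycle.length_ne_four
    (hG : ∀ v w, v ≠ w → (G.commonNeighbors v w).Subsingleton)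
    {u : V} {p : G.Walk u u} (hp : p.IsCycle) : p.length ≠ 4 := by
  intro h4
  rcases p with _ | ⟨h₁, _ | ⟨h₂, _ | ⟨h₃, _ | ⟨h₄, _ | ⟨_, _⟩⟩⟩⟩⟩ <;>
    simp only [length_cons, length_nil] at h4 <;> try omega
  have hnd := hp.support_nodup
  simp only [support_cons, support_nil, List.tail_cons, List.nodup_cons, List.mem_cons,
    List.not_mem_nil, or_false, not_or] at hnd
  rename_i a b c
  obtain ⟨⟨-, hac, -⟩, ⟨-, hbu⟩, -⟩ := hnd
  exact hac <| hG u b (fun hub => hbu hub.symm) ⟨h₁, h₂.symm⟩ ⟨h₄.symm, h₃⟩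

theorem girth_eq_six_of_colorable_two {u : V} {w : G.Walk u u} (hw : w.IsCycle)
    (hlen : w.length = 6) (hG : G.Colorable 2)
    (hc : ∀ v w, v ≠ w → (G.commonNeighbors v w).Subsingleton) : G.girth = 6 := by
  obtain ⟨v, c, hc', hgirth⟩ := exists_girth_eq_length.2 fun hac => hac w hw
  have heven : Even c.length := two_colorable_iff_forall_loop_even.1 hG v c
  have := hc'.three_le_length
  have := hc'.length_ne_four hc
  have := girth_le_length hw
  obtain ⟨k, hk⟩ := heven
  omega

end SimpleGraph

open SimpleGraph

theorem mkGraph_adj_add_one : ∀ x : ZMod 16, MKGraph.Adj x (x + 1) := by decide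

theorem mkGraph_degree : ∀ v : ZMod 16, MKGraph.degree v = 3 := by decide

theorem mkGraph_adj_val_mod_two_ne :
    ∀ x y : ZMod 16, MKGraph.Adj x y → x.val % 2 ≠ y.val % 2 := by
  decide

theorem mkGraph_colorable_two : MKGraph.Colorable 2 :=
  ⟨Coloring.mk (fun x => ⟨x.val % 2, Nat.mod_lt _ two_pos⟩)
    fun h => by simpa [Fin.ext_iff] using mkGraph_adj_val_mod_two_ne _ _ h⟩

theorem mkGraph_commonNeighbors_subsingleton :
    ∀ v w : ZMod 16, v ≠ w → (MKGraph.commonNeighbors v w).Subsingleton := by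
  have : ∀ v w : ZMod 16, v ≠ w → Fintype.card (MKGraph.commonNeighbors v w) ≤ 1 := by
    decide
  exact fun v w hvw =>
    (Set.subsingleton_coe _).1 (Fintype.card_le_one_iff_subsingleton.1 (this v w hvw))

def mkHexagon : MKGraph.Walk 0 0 :=
  .cons (show MKGraph.Adj 0 1 by decide) <| .cons (show MKGraph.Adj 1 2 by decide) <|
  .cons (show MKGraph.Adj 2 7 by decide) <| .cons (show MKGraph.Adj 7 6 by decide) <|
  .cons (show MKGraph.Adj 6 5 by decide) <| .cons (show MKGraph.Adj 5 0 by decide) .nil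

theorem mkHexagon_isCycle : mkHexagon.IsCycle :=
  Walk.isCycle_def _ |>.2 ⟨⟨by decide⟩, by simp [mkHexagon], by decide⟩

theorem stmt_12 :
    (∀ v : ZMod 16, (MKGraph.neighborSet v).ncard = 3) ∧
    MKGraph.Connected ∧
    (∀ x y : ZMod 16, MKGraph.Adj x y → x.val % 2 ≠ y.val % 2) ∧
    MKGraph.girth = 6 := by
  refine ⟨fun v => ?_, connected_of_forall_adj_add_one mkGraph_adj_add_one,
    mkGraph_adj_val_mod_two_ne, girth_eq_six_of_colorable_two mkHexagon_isCycle rfl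
    mkGraph_colorable_two mkGraph_commonNeighbors_subsingleton⟩
  rw [Set.ncard_eq_toFinset_card']
  exact mkGraph_degree v
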